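/- Let A₁, …, A_N (N ≥ 1) be bounded operators on H, let p ≥ 1 be a real exponent, let t ∈ [0,1], let S : [0,∞) × [0,∞) → [0,∞) be monotone increasing in each argument with S(a,b) ≤ t·a + (1−t)·b for all a, b ≥ 0, and let f, g : [0,∞) → [0,∞) be continuous with f(s)·g(s) = s for all s ≥ 0. Then N_{S,p}(Σ_{i=1}^N A_i) ≤ (N^{p−1}/2) · Σ_{i=1}^N [ ber(t·f(|A_i|)^{2p} + (1−t)·g(|A_i*|)^{2p}) + ber(t·g(|A_i*|)^{2p} + (1−t)·f(|A_i|)^{2p}) ]. -/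

import Mathlib

noncomputable section
open ContinuousLinearMap

variable {H : Type*} [NormedAddCommGroup H] [InnerProductSpace ℂ H] [CompleteSpace H]
variable {Ω : Type*}

/-- The Berezin radius `ber(A) = sup_{λ∈Ω} |⟨A κ(λ), κ(λ)⟩|`. -/
def ber (κ : Ω → H) (A : H →L[ℂ] H) : ℝ :=
  ⨆ l : Ω, ‖(inner ℂ (A (κ l)) (κ l) : ℂ)‖

/-- The Berezin norm `‖A‖_ber = sup_{λ,μ∈Ω} |⟨A κ(λ), κ(μ)⟩|`. -/
def berNorm (κ : Ω → H) (A : H →L[ℂ] H) : ℝ :=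
  ⨆ q : Ω × Ω, ‖(inner ℂ (A (κ q.1)) (κ q.2) : ℂ)‖

/-- `N_{S,p}(A) = sup_{λ,μ∈Ω} S(|⟨A κ(λ), κ(μ)⟩|^p, |⟨A* κ(λ), κ(μ)⟩|^p)`. -/
def NS (S : ℝ → ℝ → ℝ) (p : ℝ) (κ : Ω → H) (A : H →L[ℂ] H) : ℝ :=
  ⨆ q : Ω × Ω, S (‖(inner ℂ (A (κ q.1)) (κ q.2) : ℂ)‖ ^ p)
    (‖(inner ℂ ((adjoint A) (κ q.1)) (κ q.2) : ℂ)‖ ^ p)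

/-- `|X| = (X*X)^{1/2}` via continuous functional calculus. -/
def absOp (X : H →L[ℂ] H) : H →L[ℂ] H := cfc Real.sqrt (adjoint X * X)

/-- `h(|X|)^r` : continuous functional calculus of `|X|` applied to `s ↦ h(s)^r`. -/
def opApply (h : ℝ → ℝ) (r : ℝ) (X : H →L[ℂ] H) : H →L[ℂ] H :=
  cfc (fun s : ℝ => h s ^ r) (absOp X)

set_option maxHeartbeats 2000000

/-! ### Auxiliary lemmas -/

open RCLike

section Aux

lemma pow_mul_adjoint' (X : H →L[ℂ] H) (n : ℕ) :
    (adjoint X * X) ^ n * adjoint X = adjoint X * (X * adjoint X) ^ n := by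
  induction n with
  | zero => simp
  | succ n ih =>
    rw [pow_succ, pow_succ]
    calc (adjoint X * X) ^ n * (adjoint X * X) * adjoint X
        = (adjoint X * X) ^ n * adjoint X * (X * adjoint X) := by
          simp only [mul_assoc]
      _ = adjoint X * ((X * adjoint X) ^ n * (X * adjoint X)) := by rw [ih, mul_assoc]

lemma aeval_mul_adjoint' (X : H →L[ℂ] H) (q : Polynomial ℝ) :
    Polynomial.aeval (adjoint X * X) q * adjoint X
      = adjoint X * Polynomial.aeval (X * adjoint X) q := by
  induction q using Polynomial.induction_on with
  | C r => simp [Polynomial.aeval_C, Algebra.algebraMap_eq_smul_one, smul_mul_assoc,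
      mul_smul_comm]
  | add q₁ q₂ h₁ h₂ => simp [map_add, add_mul, mul_add, h₁, h₂]
  | monomial n r _ =>
    simp only [map_mul, Polynomial.aeval_C, map_pow, Polynomial.aeval_X,
      Algebra.algebraMap_eq_smul_one]
    rw [smul_one_mul, smul_one_mul, smul_mul_assoc, pow_mul_adjoint', mul_smul_comm]

lemma isSelfAdjoint_PX (X : H →L[ℂ] H) : IsSelfAdjoint (adjoint X * X) := by
  have := IsSelfAdjoint.star_mul_self X
  rwa [star_eq_adjoint] at this

lemma isSelfAdjoint_QX (X : H →L[ℂ] H) : IsSelfAdjoint (X * adjoint X) := by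
  have := IsSelfAdjoint.star_mul_self (adjoint X)
  rwa [star_eq_adjoint, adjoint_adjoint] at this

lemma nonneg_PX (X : H →L[ℂ] H) : (0 : H →L[ℂ] H) ≤ adjoint X * X := by
  have := star_mul_self_nonneg X
  rwa [star_eq_adjoint] at this

lemma nonneg_QX (X : H →L[ℂ] H) : (0 : H →L[ℂ] H) ≤ X * adjoint X := by
  have := star_mul_self_nonneg (adjoint X)
  rwa [star_eq_adjoint, adjoint_adjoint] at this

lemma cfc_mul_adjoint (X : H →L[ℂ] H) (φ : ℝ → ℝ) (hφ : Continuous φ) :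
    cfc φ (adjoint X * X) * adjoint X = adjoint X * cfc φ (X * adjoint X) := by
  set P := adjoint X * X with hPdef
  set Q := X * adjoint X with hQdef
  have hP : IsSelfAdjoint P := isSelfAdjoint_PX X
  have hQ : IsSelfAdjoint Q := isSelfAdjoint_QX X
  set M : ℝ := ‖(1 : H →L[ℂ] H)‖ * max ‖P‖ ‖Q‖ with hM
  have hMP : ∀ s ∈ spectrum ℝ P, s ∈ Set.Icc (-M) M := by
    intro s hs
    have h1 : ‖s‖ ≤ ‖P‖ * ‖(1 : H →L[ℂ] H)‖ := spectrum.norm_le_norm_mul_of_mem hs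
    have h2 : ‖P‖ * ‖(1 : H →L[ℂ] H)‖ ≤ M := by
      rw [hM, mul_comm]
      exact mul_le_mul_of_nonneg_left (le_max_left _ _) (norm_nonneg _)
    rw [Real.norm_eq_abs, abs_le] at h1
    constructor <;> nlinarith
  have hMQ : ∀ s ∈ spectrum ℝ Q, s ∈ Set.Icc (-M) M := by
    intro s hs
    have h1 : ‖s‖ ≤ ‖Q‖ * ‖(1 : H →L[ℂ] H)‖ := spectrum.norm_le_norm_mul_of_mem hs
    have h2 : ‖Q‖ * ‖(1 : H →L[ℂ] H)‖ ≤ M := by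
      rw [hM, mul_comm]
      exact mul_le_mul_of_nonneg_left (le_max_right _ _) (norm_nonneg _)
    rw [Real.norm_eq_abs, abs_le] at h1
    constructor <;> nlinarith
  have key : ∀ ε > (0:ℝ), ‖cfc φ P * adjoint X - adjoint X * cfc φ Q‖ ≤ 0 + ε := by
    intro ε hε
    have hden : (0:ℝ) < 2 * ‖X‖ + 1 := by positivity
    set δ : ℝ := ε / (2 * ‖X‖ + 1) with hδdef
    have hδ : 0 < δ := div_pos hε hden
    obtain ⟨q, hq⟩ := exists_polynomial_near_of_continuousOn (-M) M φ
      hφ.continuousOn δ hδ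
    have hqc : Continuous fun s : ℝ => q.eval s := q.continuous
    have hnormP : ‖cfc φ P - cfc (fun s => q.eval s) P‖ ≤ δ := by
      rw [← cfc_sub φ (fun s => q.eval s) P hφ.continuousOn hqc.continuousOn]
      refine norm_cfc_le hδ.le fun s hs => ?_
      have := hq s (hMP s hs)
      rw [Real.norm_eq_abs, abs_sub_comm]
      exact le_of_lt this
    have hnormQ : ‖cfc φ Q - cfc (fun s => q.eval s) Q‖ ≤ δ := by
      rw [← cfc_sub φ (fun s => q.eval s) Q hφ.continuousOn hqc.continuousOn]
      refine norm_cfc_le hδ.le fun s hs => ?_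
      have := hq s (hMQ s hs)
      rw [Real.norm_eq_abs, abs_sub_comm]
      exact le_of_lt this
    have hpoly : cfc (fun s => q.eval s) P * adjoint X
        = adjoint X * cfc (fun s => q.eval s) Q := by
      have e1 : cfc (fun s => q.eval s) P = Polynomial.aeval P q := cfc_polynomial q P hP
      have e2 : cfc (fun s => q.eval s) Q = Polynomial.aeval Q q := cfc_polynomial q Q hQ
      rw [e1, e2, aeval_mul_adjoint']
    have decomp : cfc φ P * adjoint X - adjoint X * cfc φ Q
        = (cfc φ P - cfc (fun s => q.eval s) P) * adjoint X
          + adjoint X * (cfc (fun s => q.eval s) Q - cfc φ Q) := by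
      rw [sub_mul, mul_sub, hpoly]; abel
    calc ‖cfc φ P * adjoint X - adjoint X * cfc φ Q‖
        ≤ ‖(cfc φ P - cfc (fun s => q.eval s) P) * adjoint X‖
          + ‖adjoint X * (cfc (fun s => q.eval s) Q - cfc φ Q)‖ := by
          rw [decomp]; exact norm_add_le _ _
      _ ≤ δ * ‖adjoint X‖ + ‖adjoint X‖ * δ := by
          gcongr
          · exact (norm_mul_le _ _).trans (by gcongr)
          · refine (norm_mul_le _ _).trans ?_
            have h : ‖cfc (fun s => q.eval s) Q - cfc φ Q‖ ≤ δ := by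
              rwa [norm_sub_rev]
            gcongr
      _ ≤ 0 + ε := by
          rw [show ‖adjoint X‖ = ‖X‖ from
            (ContinuousLinearMap.adjoint (𝕜 := ℂ) (E := H) (F := H)).norm_map X]
          have h : δ * ‖X‖ + ‖X‖ * δ = δ * (2 * ‖X‖) := by ring
          rw [h, hδdef, zero_add, div_mul_eq_mul_div, div_le_iff₀ hden]
          nlinarith [norm_nonneg X, hε.le]
  have h0 : ‖cfc φ P * adjoint X - adjoint X * cfc φ Q‖ ≤ 0 := le_of_forall_pos_le_add key
  exact sub_eq_zero.mp (norm_le_zero_iff.mp h0)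

lemma re_inner_nonneg' {T : H →L[ℂ] H} (hT : 0 ≤ T) (x : H) :
    0 ≤ re (inner ℂ (T x) x : ℂ) :=
  ((ContinuousLinearMap.nonneg_iff_isPositive T).mp hT).re_inner_nonneg_left x

lemma re_inner_mono {T₁ T₂ : H →L[ℂ] H} (h : T₁ ≤ T₂) (x : H) :
    re (inner ℂ (T₁ x) x : ℂ) ≤ re (inner ℂ (T₂ x) x : ℂ) := by
  have h0 : (0 : H →L[ℂ] H) ≤ T₂ - T₁ := sub_nonneg.mpr h
  have := re_inner_nonneg' h0 x
  rw [ContinuousLinearMap.sub_apply, inner_sub_left, map_sub] at this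
  linarith

lemma norm_apply_sq_eq {T : H →L[ℂ] H} (hT : IsSelfAdjoint T) (x : H) :
    ‖T x‖ ^ 2 = re (inner ℂ ((T * T) x) x : ℂ) := by
  have h : ((T * T) x : H) = T (T x) := rfl
  rw [h, ← ContinuousLinearMap.adjoint_inner_right, hT.adjoint_eq]
  rw [← inner_self_eq_norm_sq (𝕜 := ℂ)]

lemma norm_cfc_apply_sq {a : H →L[ℂ] H} (ha : IsSelfAdjoint a) (h : ℝ → ℝ)
    (hh : Continuous h) (x : H) :
    ‖cfc h a x‖ ^ 2 = re (inner ℂ (cfc (fun s => h s * h s) a x) x : ℂ) := by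
  rw [cfc_mul h h a hh.continuousOn hh.continuousOn]
  exact norm_apply_sq_eq (cfc_predicate h a) x

lemma norm_X_apply_eq (X : H →L[ℂ] H) (w : H) :
    ‖X w‖ = ‖cfc Real.sqrt (adjoint X * X) w‖ := by
  have hP : IsSelfAdjoint (adjoint X * X) := isSelfAdjoint_PX X
  have hPn : (0 : H →L[ℂ] H) ≤ adjoint X * X := nonneg_PX X
  have h1 : ‖X w‖ ^ 2 = re (inner ℂ ((adjoint X * X) w) w : ℂ) := by
    have h : ((adjoint X * X) w : H) = adjoint X (X w) := rfl
    rw [h, ContinuousLinearMap.adjoint_inner_left, ← inner_self_eq_norm_sq (𝕜 := ℂ)]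
  have h2 : ‖cfc Real.sqrt (adjoint X * X) w‖ ^ 2
      = re (inner ℂ ((adjoint X * X) w) w : ℂ) := by
    rw [norm_cfc_apply_sq hP Real.sqrt Real.continuous_sqrt w]
    congr 2
    have h : cfc (fun s => Real.sqrt s * Real.sqrt s) (adjoint X * X)
        = cfc (id : ℝ → ℝ) (adjoint X * X) := by
      apply cfc_congr
      intro s hs
      exact Real.mul_self_sqrt (spectrum_nonneg_of_nonneg hPn hs)
    rw [h, cfc_id ℝ (adjoint X * X) hP]
  have h3 : ‖X w‖ ^ 2 = ‖cfc Real.sqrt (adjoint X * X) w‖ ^ 2 := by rw [h1, h2]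
  calc ‖X w‖ = Real.sqrt (‖X w‖ ^ 2) := (Real.sqrt_sq (norm_nonneg _)).symm
    _ = Real.sqrt (‖cfc Real.sqrt (adjoint X * X) w‖ ^ 2) := by rw [h3]
    _ = _ := Real.sqrt_sq (norm_nonneg _)

lemma kato (X : H →L[ℂ] H) (fe ge : ℝ → ℝ) (hfe : Continuous fe) (hge : Continuous ge)
    (hge0 : ∀ s, 0 ≤ ge s)
    (hmul : ∀ s, 0 ≤ s → fe s * ge s = s) (x y : H) :
    ‖(inner ℂ (X x) y : ℂ)‖ ≤ ‖cfc (fun s => fe (Real.sqrt s)) (adjoint X * X) x‖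
      * ‖cfc (fun s => ge (Real.sqrt s)) (X * adjoint X) y‖ := by
  set P := adjoint X * X with hPdef
  set Q := X * adjoint X with hQdef
  have hP : IsSelfAdjoint P := isSelfAdjoint_PX X
  have hQ : IsSelfAdjoint Q := isSelfAdjoint_QX X
  have hPn : (0 : H →L[ℂ] H) ≤ P := nonneg_PX X
  have hQn : (0 : H →L[ℂ] H) ≤ Q := nonneg_QX X
  have hspecP : ∀ s ∈ spectrum ℝ P, 0 ≤ s := fun s hs => spectrum_nonneg_of_nonneg hPn hs
  have hspecQ : ∀ s ∈ spectrum ℝ Q, 0 ≤ s := fun s hs => spectrum_nonneg_of_nonneg hQn hs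
  have hFe : Continuous (fun s : ℝ => fe (Real.sqrt s)) := hfe.comp Real.continuous_sqrt
  have hGe : Continuous (fun s : ℝ => ge (Real.sqrt s)) := hge.comp Real.continuous_sqrt
  refine le_of_forall_pos_le_add fun ε hε => ?_
  set c : ℝ := ‖x‖ * ‖y‖ + 1 with hc
  have hc0 : (0:ℝ) < c := by positivity
  set ε' : ℝ := ε / c with hε'def
  have hε' : 0 < ε' := div_pos hε hc0
  set m : ℝ → ℝ := fun s => ge (Real.sqrt s) / (Real.sqrt s + ε') with hm_def
  set r : ℝ → ℝ := fun s => Real.sqrt s / (Real.sqrt s + ε') with hr_def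
  have hden : ∀ s : ℝ, 0 < Real.sqrt s + ε' := fun s => by positivity
  have hm : Continuous m :=
    (hge.comp Real.continuous_sqrt).div (Real.continuous_sqrt.add continuous_const)
      (fun s => (hden s).ne')
  have hr : Continuous r :=
    Real.continuous_sqrt.div (Real.continuous_sqrt.add continuous_const)
      (fun s => (hden s).ne')
  -- Step 1 : approximation error
  have step1 : ∀ z : H, ‖X z - X (cfc r P z)‖ ≤ ε' * ‖z‖ := by
    intro z
    have e0 : X z - X (cfc r P z) = X (z - cfc r P z) := (map_sub X z _).symm
    have e1 : z - cfc r P z = cfc (fun s => 1 - r s) P z := by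
      have h : cfc (fun s : ℝ => 1 - r s) P = cfc (fun _ : ℝ => (1:ℝ)) P - cfc r P :=
        cfc_sub _ _ P continuousOn_const hr.continuousOn
      have h1 : cfc (fun _ : ℝ => (1:ℝ)) P = 1 := cfc_one ℝ P hP
      rw [h, h1]
      simp
    have e2 : cfc Real.sqrt P (cfc (fun s => 1 - r s) P z)
        = cfc (fun s => Real.sqrt s * (1 - r s)) P z := by
      have h : cfc (fun s : ℝ => Real.sqrt s * (1 - r s)) P
          = cfc Real.sqrt P * cfc (fun s => 1 - r s) P :=
        cfc_mul _ _ P Real.continuous_sqrt.continuousOn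
          (continuous_const.sub hr).continuousOn
      rw [h]; rfl
    rw [e0, norm_X_apply_eq X, ← hPdef, e1, e2]
    have hbound : ‖cfc (fun s => Real.sqrt s * (1 - r s)) P‖ ≤ ε' := by
      refine norm_cfc_le hε'.le fun s hs => ?_
      have hs0 := hspecP s hs
      have h1 : 1 - r s = ε' / (Real.sqrt s + ε') := by
        rw [hr_def]; field_simp; ring
      have hle : Real.sqrt s / (Real.sqrt s + ε') ≤ 1 :=
        (div_le_one (hden s)).mpr (le_add_of_nonneg_right hε'.le)
      have h2 : Real.sqrt s * (ε' / (Real.sqrt s + ε'))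
          = (Real.sqrt s / (Real.sqrt s + ε')) * ε' := by ring
      rw [h1, Real.norm_eq_abs, abs_of_nonneg (by positivity), h2]
      exact mul_le_of_le_one_left hε'.le hle
    calc ‖cfc (fun s => Real.sqrt s * (1 - r s)) P z‖
        ≤ ‖cfc (fun s => Real.sqrt s * (1 - r s)) P‖ * ‖z‖ := le_opNorm _ z
      _ ≤ ε' * ‖z‖ := by gcongr
  -- Step 2 : factorization of cfc r P
  have step2 : cfc r P = cfc m P * cfc (fun s => fe (Real.sqrt s)) P := by
    have h : cfc (fun s : ℝ => m s * fe (Real.sqrt s)) P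
        = cfc m P * cfc (fun s => fe (Real.sqrt s)) P :=
      cfc_mul _ _ P hm.continuousOn hFe.continuousOn
    rw [← h]
    apply cfc_congr
    intro s hs
    have hs0 := hspecP s hs
    have hmul' := hmul (Real.sqrt s) (Real.sqrt_nonneg s)
    rw [hr_def, hm_def]
    field_simp
    nlinarith [hmul']
  -- Step 4 : key norm bound
  have step4 : ‖cfc m P (adjoint X y)‖ ≤ ‖cfc (fun s => ge (Real.sqrt s)) Q y‖ := by
    have hsq1 : ‖cfc m P (adjoint X y)‖ ^ 2
        = re (inner ℂ (cfc (fun s => m s * m s) P (adjoint X y)) (adjoint X y) : ℂ) :=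
      norm_cfc_apply_sq hP m hm (adjoint X y)
    have hmove : (inner ℂ (cfc (fun s => m s * m s) P (adjoint X y)) (adjoint X y) : ℂ)
        = inner ℂ (X (cfc (fun s => m s * m s) P (adjoint X y))) y := by
      rw [ContinuousLinearMap.adjoint_inner_right]
    have hcomm : X (cfc (fun s => m s * m s) P (adjoint X y))
        = cfc (fun s => s * (m s * m s)) Q y := by
      have h1 : cfc (fun s => m s * m s) P * adjoint X
          = adjoint X * cfc (fun s => m s * m s) Q :=
        cfc_mul_adjoint X _ (hm.mul hm)
      have h2 : X (cfc (fun s => m s * m s) P (adjoint X y))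
          = (X * (cfc (fun s => m s * m s) P * adjoint X)) y := rfl
      rw [h2, h1, ← mul_assoc, ← hQdef]
      have h3 : cfc (fun s : ℝ => s * (m s * m s)) Q = Q * cfc (fun s => m s * m s) Q := by
        have h4 := cfc_mul (id : ℝ → ℝ) (fun s => m s * m s) Q
          continuous_id.continuousOn (hm.mul hm).continuousOn
        rw [cfc_id ℝ Q hQ] at h4
        exact h4
      rw [h3]
    have hmono : re (inner ℂ (cfc (fun s => s * (m s * m s)) Q y) y : ℂ)
        ≤ re (inner ℂ (cfc (fun s => ge (Real.sqrt s) * ge (Real.sqrt s)) Q y) y : ℂ) := by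
      apply re_inner_mono
      apply cfc_mono
      · intro s hs
        have hs0 := hspecQ s hs
        have hsq : Real.sqrt s * Real.sqrt s = s := Real.mul_self_sqrt hs0
        have hd := hden s
        rw [hm_def]
        have key : s * (ge (Real.sqrt s) / (Real.sqrt s + ε')
              * (ge (Real.sqrt s) / (Real.sqrt s + ε')))
            = (ge (Real.sqrt s) * ge (Real.sqrt s)) * (s / (Real.sqrt s + ε') ^ 2) := by
          field_simp
        rw [key]
        have hfrac : s / (Real.sqrt s + ε') ^ 2 ≤ 1 := by
          rw [div_le_one (by positivity)]
          nlinarith [Real.sqrt_nonneg s, hε'.le]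
        have hge2 : 0 ≤ ge (Real.sqrt s) * ge (Real.sqrt s) :=
          mul_nonneg (hge0 _) (hge0 _)
        nlinarith
      · exact (continuous_id.mul (hm.mul hm)).continuousOn
      · exact (hGe.mul hGe).continuousOn
    have hsq2 : ‖cfc (fun s => ge (Real.sqrt s)) Q y‖ ^ 2
        = re (inner ℂ (cfc (fun s => ge (Real.sqrt s) * ge (Real.sqrt s)) Q y) y : ℂ) :=
      norm_cfc_apply_sq hQ _ hGe y
    have hsq : ‖cfc m P (adjoint X y)‖ ^ 2 ≤ ‖cfc (fun s => ge (Real.sqrt s)) Q y‖ ^ 2 := by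
      rw [hsq1, hmove, hcomm, hsq2]; exact hmono
    nlinarith [norm_nonneg (cfc m P (adjoint X y)),
      norm_nonneg (cfc (fun s => ge (Real.sqrt s)) Q y)]
  -- Step 3+5 : combine
  have main : ‖(inner ℂ (X (cfc r P x)) y : ℂ)‖
      ≤ ‖cfc (fun s => fe (Real.sqrt s)) P x‖ * ‖cfc (fun s => ge (Real.sqrt s)) Q y‖ := by
    have e : X (cfc r P x) = X (cfc m P (cfc (fun s => fe (Real.sqrt s)) P x)) := by
      rw [step2]; rfl
    have e2 : (inner ℂ (X (cfc m P (cfc (fun s => fe (Real.sqrt s)) P x))) y : ℂ)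
        = inner ℂ (cfc (fun s => fe (Real.sqrt s)) P x) (cfc m P (adjoint X y)) := by
      rw [← ContinuousLinearMap.adjoint_inner_right X]
      rw [← ContinuousLinearMap.adjoint_inner_right (cfc m P)]
      have hsa : adjoint (cfc m P) = cfc m P := by
        rw [← star_eq_adjoint]; exact cfc_predicate m P
      rw [hsa]
    rw [e, e2]
    calc ‖(inner ℂ (cfc (fun s => fe (Real.sqrt s)) P x) (cfc m P (adjoint X y)) : ℂ)‖
        ≤ ‖cfc (fun s => fe (Real.sqrt s)) P x‖ * ‖cfc m P (adjoint X y)‖ :=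
          norm_inner_le_norm _ _
      _ ≤ _ := by gcongr
  have split : (inner ℂ (X x) y : ℂ)
      = inner ℂ (X (cfc r P x)) y + inner ℂ (X x - X (cfc r P x)) y := by
    rw [inner_sub_left]; ring
  calc ‖(inner ℂ (X x) y : ℂ)‖
      ≤ ‖(inner ℂ (X (cfc r P x)) y : ℂ)‖ + ‖(inner ℂ (X x - X (cfc r P x)) y : ℂ)‖ := by
        rw [split]; exact norm_add_le _ _
    _ ≤ ‖cfc (fun s => fe (Real.sqrt s)) P x‖ * ‖cfc (fun s => ge (Real.sqrt s)) Q y‖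
        + ε' * ‖x‖ * ‖y‖ := by
        gcongr
        calc ‖(inner ℂ (X x - X (cfc r P x)) y : ℂ)‖
            ≤ ‖X x - X (cfc r P x)‖ * ‖y‖ := norm_inner_le_norm _ _
          _ ≤ ε' * ‖x‖ * ‖y‖ := by
              have h := step1 x
              nlinarith [norm_nonneg y]
    _ ≤ _ + ε := by
        gcongr
        rw [hε'def, div_mul_eq_mul_div, div_mul_eq_mul_div, div_le_iff₀ hc0]
        nlinarith [norm_nonneg x, norm_nonneg y, hε.le]

lemma holder_mccarthy {T : H →L[ℂ] H} (hT : 0 ≤ T) {p : ℝ} (hp : 1 ≤ p)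
    {x : H} (hx : ‖x‖ = 1) :
    re (inner ℂ (T x) x : ℂ) ^ p ≤ re (inner ℂ (cfc (fun s : ℝ => s ^ p) T x) x : ℂ) := by
  have hTsa : IsSelfAdjoint T :=
    ((ContinuousLinearMap.nonneg_iff_isPositive T).mp hT).isSelfAdjoint
  have hspec : ∀ s ∈ spectrum ℝ T, 0 ≤ s := fun s hs => spectrum_nonneg_of_nonneg hT hs
  have hp0 : (0:ℝ) < p := by linarith
  have hcont : ContinuousOn (fun s : ℝ => s ^ p) (spectrum ℝ T) := fun s _ =>
    (Real.continuousAt_rpow_const s p (Or.inr hp0.le)).continuousWithinAt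
  set c : ℝ := re (inner ℂ (T x) x : ℂ) with hcdef
  have hc : 0 ≤ c := re_inner_nonneg' hT x
  have hrpow_nonneg : (0:H →L[ℂ] H) ≤ cfc (fun s : ℝ => s ^ p) T :=
    cfc_nonneg fun s hs => Real.rpow_nonneg (hspec s hs) p
  rcases eq_or_lt_of_le hc with hc0 | hc0
  · rw [← hc0, Real.zero_rpow hp0.ne']
    exact re_inner_nonneg' hrpow_nonneg x
  · have hkey : ∀ s ∈ spectrum ℝ T,
        (c ^ p - p * c ^ (p-1) * c) + (p * c ^ (p-1)) * s ≤ s ^ p := by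
      intro s hs
      have hs0 := hspec s hs
      have hz : -1 ≤ s / c - 1 := by
        have : 0 ≤ s / c := div_nonneg hs0 hc
        linarith
      have hb := one_add_mul_self_le_rpow_one_add hz hp
      have h1 : (1 : ℝ) + (s / c - 1) = s / c := by ring
      rw [h1] at hb
      have h2 : (s / c) ^ p = s ^ p / c ^ p := Real.div_rpow hs0 hc0.le p
      have hcp : 0 < c ^ p := Real.rpow_pos_of_pos hc0 p
      have hmul := mul_le_mul_of_nonneg_left hb hcp.le
      have hc1 : c ^ p * (s / c) ^ p = s ^ p := by
        rw [h2]; field_simp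
      have hcc : c ^ (p - 1) = c ^ p / c := Real.rpow_sub_one hc0.ne' p
      rw [hc1] at hmul
      have expand : c ^ p * (1 + p * (s / c - 1))
          = (c ^ p - p * (c ^ p / c) * c) + (p * (c ^ p / c)) * s := by
        field_simp
        ring
      rw [expand, ← hcc] at hmul
      exact hmul
    have hmono : cfc (fun s : ℝ => (c ^ p - p * c ^ (p-1) * c) + (p * c ^ (p-1)) * s) T
        ≤ cfc (fun s : ℝ => s ^ p) T :=
      cfc_mono hkey (by fun_prop) hcont
    have haff : cfc (fun s : ℝ => (c ^ p - p * c ^ (p-1) * c) + (p * c ^ (p-1)) * s) T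
        = (c ^ p - p * c ^ (p-1) * c) • (1 : H →L[ℂ] H) + (p * c ^ (p-1)) • T := by
      rw [cfc_add T _ _ continuousOn_const (by fun_prop)]
      rw [cfc_const _ T hTsa, cfc_const_mul_id _ T hTsa, Algebra.algebraMap_eq_smul_one]
    have hval : re (inner ℂ ((cfc (fun s : ℝ => (c ^ p - p * c ^ (p-1) * c)
        + (p * c ^ (p-1)) * s) T) x) x : ℂ) = c ^ p := by
      rw [haff]
      have happ : (((c ^ p - p * c ^ (p-1) * c) • (1 : H →L[ℂ] H)
          + (p * c ^ (p-1)) • T) x : H)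
          = (c ^ p - p * c ^ (p-1) * c) • x + (p * c ^ (p-1)) • (T x) := by
        simp
      rw [happ, inner_add_left, map_add]
      have e1 : (inner ℂ ((c ^ p - p * c ^ (p-1) * c) • x) x : ℂ)
          = (c ^ p - p * c ^ (p-1) * c) • (inner ℂ x x : ℂ) := by
        rw [← inner_smul_real_left]
        norm_cast
      have e2 : (inner ℂ ((p * c ^ (p-1)) • (T x)) x : ℂ)
          = (p * c ^ (p-1)) • (inner ℂ (T x) x : ℂ) := by
        rw [← inner_smul_real_left]
        norm_cast
      have hxx : re (inner ℂ x x : ℂ) = 1 := by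
        rw [inner_self_eq_norm_sq (𝕜 := ℂ) x, hx]; norm_num
      rw [e1, e2, smul_re, smul_re, ← hcdef, hxx]
      ring
    calc c ^ p = re (inner ℂ ((cfc (fun s : ℝ => (c ^ p - p * c ^ (p-1) * c)
        + (p * c ^ (p-1)) * s) T) x) x : ℂ) := hval.symm
      _ ≤ _ := re_inner_mono hmono x

lemma rpow_two_mul {u : ℝ} (hu : 0 ≤ u) (p : ℝ) : (u ^ 2) ^ p = u ^ (2 * p) := by
  rw [← Real.rpow_natCast u 2, ← Real.rpow_mul hu]
  norm_num

lemma rpow_sq' {u : ℝ} (hu : 0 ≤ u) (p : ℝ) : (u ^ p) ^ 2 = u ^ (2 * p) := by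
  rw [← Real.rpow_natCast (u ^ p) 2, ← Real.rpow_mul hu]
  ring_nf

lemma scalar_amgm {u v α β p : ℝ} (hu : 0 ≤ u) (hv : 0 ≤ v) (_ : 1 ≤ p)
    (hα : u ^ (2*p) ≤ α) (hβ : v ^ (2*p) ≤ β) : (u*v) ^ p ≤ (α + β) / 2 := by
  have h1 : (u*v) ^ p = u ^ p * v ^ p := Real.mul_rpow hu hv
  have h2 := rpow_sq' hu p
  have h3 := rpow_sq' hv p
  nlinarith [sq_nonneg (u ^ p - v ^ p), Real.rpow_nonneg hu p, Real.rpow_nonneg hv p]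

lemma hm_chain (X : H →L[ℂ] H) (he : ℝ → ℝ) (hhe : Continuous he) (hhe0 : ∀ s, 0 ≤ he s)
    {p : ℝ} (hp : 1 ≤ p) (x : H) (hx : ‖x‖ = 1) :
    ‖cfc (fun s => he (Real.sqrt s)) (adjoint X * X) x‖ ^ (2 * p)
      ≤ re (inner ℂ (cfc (fun s => he (Real.sqrt s) ^ (2 * p)) (adjoint X * X) x) x : ℂ) := by
  set P := adjoint X * X with hPdef
  have hP : IsSelfAdjoint P := isSelfAdjoint_PX X
  have hp0 : (0:ℝ) < p := by linarith
  have hHe : Continuous fun s : ℝ => he (Real.sqrt s) := hhe.comp Real.continuous_sqrt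
  have h1 : ‖cfc (fun s => he (Real.sqrt s)) P x‖ ^ 2
      = re (inner ℂ (cfc (fun s => he (Real.sqrt s) * he (Real.sqrt s)) P x) x : ℂ) :=
    norm_cfc_apply_sq hP _ hHe x
  set T := cfc (fun s => he (Real.sqrt s) * he (Real.sqrt s)) P with hTdef
  have hTn : (0:H →L[ℂ] H) ≤ T := cfc_nonneg fun s _ => mul_nonneg (hhe0 _) (hhe0 _)
  have h2 : re (inner ℂ (T x) x : ℂ) ^ p ≤ re (inner ℂ (cfc (fun s : ℝ => s ^ p) T x) x : ℂ) :=
    holder_mccarthy hTn hp hx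
  have h3 : cfc (fun s : ℝ => s ^ p) T = cfc (fun s => he (Real.sqrt s) ^ (2*p)) P := by
    rw [hTdef]
    have himg : (fun s => he (Real.sqrt s) * he (Real.sqrt s)) '' spectrum ℝ P
        ⊆ Set.Ici 0 := by
      rintro _ ⟨s, _, rfl⟩
      exact mul_nonneg (hhe0 _) (hhe0 _)
    have hg : ContinuousOn (fun s : ℝ => s ^ p)
        ((fun s => he (Real.sqrt s) * he (Real.sqrt s)) '' spectrum ℝ P) := fun s _ =>
      (Real.continuousAt_rpow_const s p (Or.inr hp0.le)).continuousWithinAt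
    rw [← cfc_comp (fun s : ℝ => s ^ p)
      (fun s => he (Real.sqrt s) * he (Real.sqrt s)) P hP hg (hHe.mul hHe).continuousOn]
    apply cfc_congr
    intro s _
    show (he (Real.sqrt s) * he (Real.sqrt s)) ^ p = he (Real.sqrt s) ^ (2*p)
    have ha := hhe0 (Real.sqrt s)
    rw [← pow_two, rpow_two_mul ha]
  calc ‖cfc (fun s => he (Real.sqrt s)) P x‖ ^ (2 * p)
      = (‖cfc (fun s => he (Real.sqrt s)) P x‖ ^ 2) ^ p :=
        (rpow_two_mul (norm_nonneg _) p).symm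
    _ = re (inner ℂ (T x) x : ℂ) ^ p := by rw [h1, hTdef]
    _ ≤ re (inner ℂ (cfc (fun s : ℝ => s ^ p) T x) x : ℂ) := h2
    _ = _ := by rw [h3]

lemma opApply_eq (X : H →L[ℂ] H) (h : ℝ → ℝ) (hh : ContinuousOn h (Set.Ici 0))
    {r : ℝ} (hr : 0 < r) :
    opApply h r X = cfc (fun s => h (Real.sqrt s) ^ r) (adjoint X * X) := by
  have hP : IsSelfAdjoint (adjoint X * X) := isSelfAdjoint_PX X
  have himg : Real.sqrt '' spectrum ℝ (adjoint X * X) ⊆ Set.Ici 0 := by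
    rintro _ ⟨s, _, rfl⟩
    exact Real.sqrt_nonneg s
  have hg : ContinuousOn (fun v => h v ^ r) (Set.Ici 0) := fun v hv =>
    (Real.continuousAt_rpow_const (h v) r (Or.inr hr.le)).comp_continuousWithinAt (hh v hv)
  simp only [opApply, absOp]
  rw [← cfc_comp (fun s => h s ^ r) Real.sqrt (adjoint X * X) hP (hg.mono himg)
    Real.continuous_sqrt.continuousOn]
  rfl

lemma le_ber (κ : Ω → H) (hκ : ∀ l, ‖κ l‖ = 1) (T : H →L[ℂ] H) (l : Ω) :
    ‖(inner ℂ (T (κ l)) (κ l) : ℂ)‖ ≤ ber κ T := by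
  refine le_ciSup_of_le ?_ l le_rfl
  refine ⟨‖T‖, ?_⟩
  rintro _ ⟨j, rfl⟩
  calc ‖(inner ℂ (T (κ j)) (κ j) : ℂ)‖ ≤ ‖T (κ j)‖ * ‖κ j‖ := norm_inner_le_norm _ _
    _ ≤ ‖T‖ * ‖κ j‖ * ‖κ j‖ := by gcongr; exact le_opNorm T _
    _ = ‖T‖ := by rw [hκ j]; ring

lemma re_inner_smul_add (a b : ℝ) (F G : H →L[ℂ] H) (x : H) :
    re (inner ℂ ((a • F + b • G) x) x : ℂ)
      = a * re (inner ℂ (F x) x : ℂ) + b * re (inner ℂ (G x) x : ℂ) := by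
  have happ : ((a • F + b • G) x : H) = a • (F x) + b • (G x) := by simp
  rw [happ, inner_add_left, map_add]
  have e1 : (inner ℂ (a • (F x)) x : ℂ) = a • (inner ℂ (F x) x : ℂ) := by
    rw [← inner_smul_real_left]; norm_cast
  have e2 : (inner ℂ (b • (G x)) x : ℂ) = b • (inner ℂ (G x) x : ℂ) := by
    rw [← inner_smul_real_left]; norm_cast
  rw [e1, e2, smul_re, smul_re]

end Aux

theorem stmt3 [Nonempty Ω] (κ : Ω → H) (hκ : ∀ l, ‖κ l‖ = 1)
    (N : ℕ) (hN : 1 ≤ N) (A : Fin N → (H →L[ℂ] H))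
    (p : ℝ) (hp : 1 ≤ p)
    (t : ℝ) (ht0 : 0 ≤ t) (ht1 : t ≤ 1)
    (S : ℝ → ℝ → ℝ)
    (hS_nonneg : ∀ a b : ℝ, 0 ≤ a → 0 ≤ b → 0 ≤ S a b)
    (hS_mono₁ : ∀ b ∈ Set.Ici (0 : ℝ), MonotoneOn (fun a => S a b) (Set.Ici 0))
    (hS_mono₂ : ∀ a ∈ Set.Ici (0 : ℝ), MonotoneOn (fun b => S a b) (Set.Ici 0))
    (hS_le : ∀ a b : ℝ, 0 ≤ a → 0 ≤ b → S a b ≤ t * a + (1 - t) * b)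
    (f g : ℝ → ℝ)
    (hf_cont : ContinuousOn f (Set.Ici 0)) (hg_cont : ContinuousOn g (Set.Ici 0))
    (hf_nonneg : ∀ s : ℝ, 0 ≤ s → 0 ≤ f s) (hg_nonneg : ∀ s : ℝ, 0 ≤ s → 0 ≤ g s)
    (hfg : ∀ s : ℝ, 0 ≤ s → f s * g s = s) :
    NS S p κ (∑ i, A i)
      ≤ ((N : ℝ) ^ (p - 1) / 2)
        * ∑ i, (ber κ (t • opApply f (2 * p) (A i) + (1 - t) • opApply g (2 * p) (adjoint (A i)))
              + ber κ (t • opApply g (2 * p) (adjoint (A i)) + (1 - t) • opApply f (2 * p) (A i))) := by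
  have hp0 : (0:ℝ) < p := by linarith
  have h2p : (0:ℝ) < 2 * p := by linarith
  -- extended functions
  set fe : ℝ → ℝ := fun s => f (max s 0) with hfe_def
  set ge : ℝ → ℝ := fun s => g (max s 0) with hge_def
  have hfe : Continuous fe :=
    hf_cont.comp_continuous (continuous_id.max continuous_const) (fun s => le_max_right s 0)
  have hge : Continuous ge :=
    hg_cont.comp_continuous (continuous_id.max continuous_const) (fun s => le_max_right s 0)
  have hfe0 : ∀ s, 0 ≤ fe s := fun s => hf_nonneg _ (le_max_right s 0)
  have hge0 : ∀ s, 0 ≤ ge s := fun s => hg_nonneg _ (le_max_right s 0)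
  have hmulfg : ∀ s, 0 ≤ s → fe s * ge s = s := fun s hs => by
    simp only [hfe_def, hge_def, max_eq_left hs]; exact hfg s hs
  have hmulgf : ∀ s, 0 ≤ s → ge s * fe s = s := fun s hs => by
    rw [mul_comm]; exact hmulfg s hs
  have hfe_sqrt : ∀ s : ℝ, fe (Real.sqrt s) = f (Real.sqrt s) := fun s => by
    simp only [hfe_def, max_eq_left (Real.sqrt_nonneg s)]
  have hge_sqrt : ∀ s : ℝ, ge (Real.sqrt s) = g (Real.sqrt s) := fun s => by
    simp only [hge_def, max_eq_left (Real.sqrt_nonneg s)]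
  -- opApply identification
  have hopF : ∀ i, opApply f (2*p) (A i)
      = cfc (fun s => fe (Real.sqrt s) ^ (2*p)) (adjoint (A i) * A i) := by
    intro i
    rw [opApply_eq (A i) f hf_cont h2p]
    congr 1; funext s; rw [hfe_sqrt]
  have hopG : ∀ i, opApply g (2*p) (adjoint (A i))
      = cfc (fun s => ge (Real.sqrt s) ^ (2*p)) (A i * adjoint (A i)) := by
    intro i
    rw [opApply_eq (adjoint (A i)) g hg_cont h2p, adjoint_adjoint]
    congr 1; funext s; rw [hge_sqrt]
  simp only [NS]
  refine ciSup_le fun q => ?_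
  obtain ⟨l, μ⟩ := q
  simp only []
  have hx : ‖κ l‖ = 1 := hκ l
  have hy : ‖κ μ‖ = 1 := hκ μ
  -- per-index norms
  set u : Fin N → ℝ :=
    fun i => ‖cfc (fun s => fe (Real.sqrt s)) (adjoint (A i) * A i) (κ l)‖ with hu_def
  set v : Fin N → ℝ :=
    fun i => ‖cfc (fun s => ge (Real.sqrt s)) (A i * adjoint (A i)) (κ μ)‖ with hv_def
  set w : Fin N → ℝ :=
    fun i => ‖cfc (fun s => ge (Real.sqrt s)) (A i * adjoint (A i)) (κ l)‖ with hw_def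
  set z : Fin N → ℝ :=
    fun i => ‖cfc (fun s => fe (Real.sqrt s)) (adjoint (A i) * A i) (κ μ)‖ with hz_def
  have kato1 : ∀ i, ‖(inner ℂ (A i (κ l)) (κ μ) : ℂ)‖ ≤ u i * v i := fun i =>
    kato (A i) fe ge hfe hge hge0 hmulfg (κ l) (κ μ)
  have kato2 : ∀ i, ‖(inner ℂ (adjoint (A i) (κ l)) (κ μ) : ℂ)‖ ≤ w i * z i := by
    intro i
    have h := kato (adjoint (A i)) ge fe hge hfe hfe0 hmulgf (κ l) (κ μ)
    rwa [adjoint_adjoint] at h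
  have hsum1 : ‖(inner ℂ ((∑ i, A i) (κ l)) (κ μ) : ℂ)‖ ≤ ∑ i, u i * v i := by
    have e : ((∑ i, A i) (κ l) : H) = ∑ i, A i (κ l) := by
      simp [ContinuousLinearMap.sum_apply]
    rw [e, sum_inner]
    exact (norm_sum_le _ _).trans (Finset.sum_le_sum fun i _ => kato1 i)
  have hadj : adjoint (∑ i, A i) = ∑ i, adjoint (A i) := by
    rw [← star_eq_adjoint, star_sum]
    exact Finset.sum_congr rfl fun i _ => star_eq_adjoint (A i)
  have hsum2 : ‖(inner ℂ ((adjoint (∑ i, A i)) (κ l)) (κ μ) : ℂ)‖ ≤ ∑ i, w i * z i := by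
    rw [hadj]
    have e : ((∑ i, adjoint (A i)) (κ l) : H) = ∑ i, adjoint (A i) (κ l) := by
      simp [ContinuousLinearMap.sum_apply]
    rw [e, sum_inner]
    exact (norm_sum_le _ _).trans (Finset.sum_le_sum fun i _ => kato2 i)
  -- HM bounds
  set α : Fin N → ℝ := fun i => re (inner ℂ (opApply f (2*p) (A i) (κ l)) (κ l) : ℂ) with hα_def
  set β : Fin N → ℝ :=
    fun i => re (inner ℂ (opApply g (2*p) (adjoint (A i)) (κ μ)) (κ μ) : ℂ) with hβ_def
  set γ : Fin N → ℝ :=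
    fun i => re (inner ℂ (opApply g (2*p) (adjoint (A i)) (κ l)) (κ l) : ℂ) with hγ_def
  set δ : Fin N → ℝ := fun i => re (inner ℂ (opApply f (2*p) (A i) (κ μ)) (κ μ) : ℂ) with hδ_def
  have hα : ∀ i, u i ^ (2*p) ≤ α i := by
    intro i
    have h := hm_chain (A i) fe hfe hfe0 hp (κ l) hx
    rw [hα_def]
    simp only [hopF i]
    exact h
  have hδ : ∀ i, z i ^ (2*p) ≤ δ i := by
    intro i
    have h := hm_chain (A i) fe hfe hfe0 hp (κ μ) hy
    rw [hδ_def]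
    simp only [hopF i]
    exact h
  have hβ : ∀ i, v i ^ (2*p) ≤ β i := by
    intro i
    have h := hm_chain (adjoint (A i)) ge hge hge0 hp (κ μ) hy
    rw [adjoint_adjoint] at h
    rw [hβ_def]
    simp only [hopG i]
    exact h
  have hγ : ∀ i, w i ^ (2*p) ≤ γ i := by
    intro i
    have h := hm_chain (adjoint (A i)) ge hge hge0 hp (κ l) hx
    rw [adjoint_adjoint] at h
    rw [hγ_def]
    simp only [hopG i]
    exact h
  -- per index combination
  have hper : ∀ i, t * (u i * v i) ^ p + (1 - t) * (w i * z i) ^ p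
      ≤ (ber κ (t • opApply f (2*p) (A i) + (1-t) • opApply g (2*p) (adjoint (A i)))
        + ber κ (t • opApply g (2*p) (adjoint (A i)) + (1-t) • opApply f (2*p) (A i))) / 2 := by
    intro i
    have h1 : (u i * v i) ^ p ≤ (α i + β i) / 2 :=
      scalar_amgm (norm_nonneg _) (norm_nonneg _) hp (hα i) (hβ i)
    have h2 : (w i * z i) ^ p ≤ (γ i + δ i) / 2 :=
      scalar_amgm (norm_nonneg _) (norm_nonneg _) hp (hγ i) (hδ i)
    have e1 : re (inner ℂ ((t • opApply f (2*p) (A i)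
          + (1-t) • opApply g (2*p) (adjoint (A i))) (κ l)) (κ l) : ℂ)
        = t * α i + (1-t) * γ i := by
      rw [re_inner_smul_add, hα_def, hγ_def]
    have e2 : re (inner ℂ ((t • opApply g (2*p) (adjoint (A i))
          + (1-t) • opApply f (2*p) (A i)) (κ μ)) (κ μ) : ℂ)
        = t * β i + (1-t) * δ i := by
      rw [re_inner_smul_add, hβ_def, hδ_def]
    have hb1 : re (inner ℂ ((t • opApply f (2*p) (A i)
          + (1-t) • opApply g (2*p) (adjoint (A i))) (κ l)) (κ l) : ℂ)
        ≤ ber κ (t • opApply f (2*p) (A i) + (1-t) • opApply g (2*p) (adjoint (A i))) :=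
      (RCLike.re_le_norm _).trans (le_ber κ hκ _ l)
    have hb2 : re (inner ℂ ((t • opApply g (2*p) (adjoint (A i))
          + (1-t) • opApply f (2*p) (A i)) (κ μ)) (κ μ) : ℂ)
        ≤ ber κ (t • opApply g (2*p) (adjoint (A i)) + (1-t) • opApply f (2*p) (A i)) :=
      (RCLike.re_le_norm _).trans (le_ber κ hκ _ μ)
    rw [e1] at hb1
    rw [e2] at hb2
    have ht1' : 0 ≤ 1 - t := by linarith
    nlinarith [h1, h2, hb1, hb2]
  -- final assembly
  have hcard : ((Finset.univ : Finset (Fin N)).card : ℝ) = (N : ℝ) := by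
    simp
  have hNp : (0:ℝ) ≤ (N : ℝ) ^ (p-1) := Real.rpow_nonneg (Nat.cast_nonneg N) _
  have hbound1 : ‖(inner ℂ ((∑ i, A i) (κ l)) (κ μ) : ℂ)‖ ^ p
      ≤ (N:ℝ) ^ (p-1) * ∑ i, (u i * v i) ^ p := by
    calc ‖(inner ℂ ((∑ i, A i) (κ l)) (κ μ) : ℂ)‖ ^ p
        ≤ (∑ i, u i * v i) ^ p :=
          Real.rpow_le_rpow (norm_nonneg _) hsum1 hp0.le
      _ ≤ ((Finset.univ : Finset (Fin N)).card : ℝ) ^ (p-1) * ∑ i, (u i * v i) ^ p :=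
          Real.rpow_sum_le_const_mul_sum_rpow_of_nonneg Finset.univ hp
            (fun i _ => mul_nonneg (norm_nonneg _) (norm_nonneg _))
      _ = (N:ℝ) ^ (p-1) * ∑ i, (u i * v i) ^ p := by rw [hcard]
  have hbound2 : ‖(inner ℂ ((adjoint (∑ i, A i)) (κ l)) (κ μ) : ℂ)‖ ^ p
      ≤ (N:ℝ) ^ (p-1) * ∑ i, (w i * z i) ^ p := by
    calc ‖(inner ℂ ((adjoint (∑ i, A i)) (κ l)) (κ μ) : ℂ)‖ ^ p
        ≤ (∑ i, w i * z i) ^ p :=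
          Real.rpow_le_rpow (norm_nonneg _) hsum2 hp0.le
      _ ≤ ((Finset.univ : Finset (Fin N)).card : ℝ) ^ (p-1) * ∑ i, (w i * z i) ^ p :=
          Real.rpow_sum_le_const_mul_sum_rpow_of_nonneg Finset.univ hp
            (fun i _ => mul_nonneg (norm_nonneg _) (norm_nonneg _))
      _ = (N:ℝ) ^ (p-1) * ∑ i, (w i * z i) ^ p := by rw [hcard]
  calc S (‖(inner ℂ ((∑ i, A i) (κ l)) (κ μ) : ℂ)‖ ^ p)
        (‖(inner ℂ ((adjoint (∑ i, A i)) (κ l)) (κ μ) : ℂ)‖ ^ p)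
      ≤ t * (‖(inner ℂ ((∑ i, A i) (κ l)) (κ μ) : ℂ)‖ ^ p)
        + (1 - t) * (‖(inner ℂ ((adjoint (∑ i, A i)) (κ l)) (κ μ) : ℂ)‖ ^ p) :=
        hS_le _ _ (Real.rpow_nonneg (norm_nonneg _) p) (Real.rpow_nonneg (norm_nonneg _) p)
    _ ≤ t * ((N:ℝ) ^ (p-1) * ∑ i, (u i * v i) ^ p)
        + (1 - t) * ((N:ℝ) ^ (p-1) * ∑ i, (w i * z i) ^ p) := by
        have ht1' : (0:ℝ) ≤ 1 - t := by linarith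
        gcongr
    _ = (N:ℝ) ^ (p-1) * ∑ i, (t * (u i * v i) ^ p + (1 - t) * (w i * z i) ^ p) := by
        simp only [Finset.mul_sum, mul_add, Finset.sum_add_distrib]
        congr 1 <;> exact Finset.sum_congr rfl fun i _ => by ring
    _ ≤ (N:ℝ) ^ (p-1) * ∑ i,
          ((ber κ (t • opApply f (2*p) (A i) + (1-t) • opApply g (2*p) (adjoint (A i)))
          + ber κ (t • opApply g (2*p) (adjoint (A i)) + (1-t) • opApply f (2*p) (A i))) / 2) := by
        apply mul_le_mul_of_nonneg_left _ hNp
        exact Finset.sum_le_sum fun i _ => hper i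
    _ = ((N : ℝ) ^ (p - 1) / 2)
        * ∑ i, (ber κ (t • opApply f (2 * p) (A i) + (1 - t) • opApply g (2 * p) (adjoint (A i)))
              + ber κ (t • opApply g (2 * p) (adjoint (A i)) + (1 - t) • opApply f (2 * p) (A i))) := by
        rw [← Finset.sum_div]
        ring
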